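/- Let H be a Hopf G-coalgebra over a field k and let α, β ∈ G. Regard H_{αβ} ⊗_k H_β as a left H_{αβ}-module by left multiplication on the first tensor factor (h·(x⊗m) = hx⊗m), and regard H_α ⊗_k H_β as a left H_{αβ}-module via Δ_{α,β} (h·(u⊗v) = h_{(1)}u ⊗ h_{(2)}v where Δ_{α,β}(h) = h_{(1)}⊗h_{(2)}). Then the k-linear map φ_{α,β} : H_{αβ} ⊗ H_β → H_α ⊗ H_β, h ⊗ m ↦ h_{(1)} ⊗ h_{(2)}m, is an isomorphism of H_{αβ}-modules, with inverse ψ_{α,β} : H_α ⊗ H_β → H_{αβ} ⊗ H_β, x ⊗ y ↦ x_{(1)} ⊗ S_{β⁻¹}(x_{(2)})y, where Δ_{αβ,β⁻¹}(x) = x_{(1)} ⊗ x_{(2)} (using H_α = H_{(αβ)β⁻¹}). -/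

import Mathlib

open scoped TensorProduct

/-- Transport along an equality of indices, as an algebra isomorphism. -/
def castAlg (k : Type) [CommSemiring k] {G : Type} {H : G → Type}
    [∀ γ : G, Ring (H γ)] [∀ γ : G, Algebra k (H γ)]
    {γ γ' : G} (h : γ = γ') : H γ ≃ₐ[k] H γ' := by
  subst h; exact AlgEquiv.refl

/-- A Hopf `G`-coalgebra over a field `k`. -/
structure HopfGCoalgebra (k G : Type) [Field k] [Group G] (H : G → Type)
    [∀ γ : G, Ring (H γ)] [∀ γ : G, Algebra k (H γ)] where
  Δ : ∀ α β : G, H (α * β) →ₐ[k] (H α ⊗[k] H β)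
  ε : H (1 : G) →ₐ[k] k
  S : ∀ γ : G, H γ →ₗ[k] H γ⁻¹
  coassoc : ∀ (α β γ : G) (x : H (α * β * γ)),
    (TensorProduct.map (Δ α β).toLinearMap LinearMap.id) (Δ (α * β) γ x)
      = (TensorProduct.assoc k (H α) (H β) (H γ)).symm
          ((TensorProduct.map LinearMap.id (Δ β γ).toLinearMap)
            (Δ α (β * γ) (castAlg k (mul_assoc α β γ) x)))
  counit_right : ∀ (α : G) (x : H (α * 1)),
    (TensorProduct.rid k (H α)) ((TensorProduct.map LinearMap.id ε.toLinearMap) (Δ α 1 x))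
      = castAlg k (mul_one α) x
  counit_left : ∀ (α : G) (x : H (1 * α)),
    (TensorProduct.lid k (H α)) ((TensorProduct.map ε.toLinearMap LinearMap.id) (Δ 1 α x))
      = castAlg k (one_mul α) x
  antipode_left : ∀ (α : G) (x : H (α⁻¹ * α)),
    (LinearMap.mul' k (H α))
      ((TensorProduct.map ((castAlg k (inv_inv α)).toLinearMap ∘ₗ S α⁻¹) LinearMap.id)
        (Δ α⁻¹ α x))
      = ε (castAlg k (inv_mul_cancel α) x) • 1
  antipode_right : ∀ (α : G) (x : H (α * α⁻¹)),
    (LinearMap.mul' k (H α))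
      ((TensorProduct.map LinearMap.id ((castAlg k (inv_inv α)).toLinearMap ∘ₗ S α⁻¹))
        (Δ α α⁻¹ x))
      = ε (castAlg k (mul_inv_cancel α) x) • 1

namespace HopfGCoalgebra

variable {k G : Type} [Field k] [Group G] {H : G → Type}
  [∀ γ : G, Ring (H γ)] [∀ γ : G, Algebra k (H γ)]

/-- A family of linear forms is a right `G`-integral. -/
def IsRightIntegral (D : HopfGCoalgebra k G H) (μ : ∀ γ : G, H γ →ₗ[k] k) : Prop :=
  ∀ (α β : G) (x : H (α * β)),
    (TensorProduct.lid k (H β)) ((TensorProduct.map (μ α) LinearMap.id) (D.Δ α β x))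
      = μ (α * β) x • 1

/-- A family of linear forms is a left `G`-integral. -/
def IsLeftIntegral (D : HopfGCoalgebra k G H) (μ : ∀ γ : G, H γ →ₗ[k] k) : Prop :=
  ∀ (α β : G) (x : H (α * β)),
    (TensorProduct.rid k (H α)) ((TensorProduct.map LinearMap.id (μ β)) (D.Δ α β x))
      = μ (α * β) x • 1

/-- A family of invertible elements is a pivot. -/
structure IsPivot (D : HopfGCoalgebra k G H) (g : ∀ γ : G, (H γ)ˣ) : Prop where
  delta : ∀ α β : G, D.Δ α β (g (α * β) : H (α * β)) = (g α : H α) ⊗ₜ[k] (g β : H β)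
  counit : D.ε (g 1 : H 1) = 1
  antipode : ∀ (α : G) (x : H α),
    castAlg k (inv_inv α) (D.S α⁻¹ (D.S α x)) = (g α : H α) * x * ((g α)⁻¹ : (H α)ˣ)

/-- `H` is unimodular if `H₁` admits a nonzero two-sided cointegral. -/
def IsUnimodular (D : HopfGCoalgebra k G H) : Prop :=
  ∃ Λ : H 1, Λ ≠ 0 ∧ ∀ h : H 1, h * Λ = D.ε h • Λ ∧ Λ * h = D.ε h • Λ

/-- A `G`-comodulus for a right `G`-integral `μ`. -/
structure IsComodulus (D : HopfGCoalgebra k G H) (μ : ∀ γ : G, H γ →ₗ[k] k)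
    (a : ∀ γ : G, (H γ)ˣ) : Prop where
  delta : ∀ α β : G, D.Δ α β (a (α * β) : H (α * β)) = (a α : H α) ⊗ₜ[k] (a β : H β)
  counit : D.ε (a 1 : H 1) = 1
  rel : ∀ (α β : G) (x : H (α * β)),
    (TensorProduct.rid k (H α)) ((TensorProduct.map LinearMap.id (μ β)) (D.Δ α β x))
      = μ (α * β) x • (a α : H α)

end HopfGCoalgebra

/-! Both `φ` and `ψ` commute with right multiplication by `H_β` on the second factor, so their
composites are determined by their values on `x ⊗ 1` and `h ⊗ 1`. There coassociativity turns
`φψ(x ⊗ 1)` into `x₍₁₎ ⊗ x₍₂₎S_{β⁻¹}(x₍₃₎)` and `ψφ(h ⊗ 1)` into `h₍₁₎ ⊗ S_{β⁻¹}(h₍₂₎)h₍₃₎`,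
which the antipode and counit axioms collapse to `x ⊗ 1` and `h ⊗ 1`. -/

open TensorProduct LinearMap

section ExtendRight

variable {R M N P B : Type*} [CommSemiring R] [AddCommMonoid M] [Module R M]
  [AddCommMonoid N] [Module R N] [AddCommMonoid P] [Module R P] [Semiring B] [Algebra R B]

/-- The extension `m ⊗ b ↦ f(m) · b` of `f`, where `b` multiplies the second factor of `N ⊗ B`
on the right. -/
def LinearMap.extendRight (f : M →ₗ[R] N ⊗[R] B) : M ⊗[R] B →ₗ[R] N ⊗[R] B :=
  (mul' R B).lTensor N ∘ₗ (TensorProduct.assoc R N B B).toLinearMap ∘ₗ f.rTensor B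

theorem LinearMap.extendRight_apply (f : M →ₗ[R] N ⊗[R] B) (t : M ⊗[R] B) :
    f.extendRight t = (mul' R B).lTensor N (TensorProduct.assoc R N B B (f.rTensor B t)) :=
  rfl

theorem LinearMap.lTensor_mul'_assoc_tmul (u : N ⊗[R] B) (b : B) :
    (mul' R B).lTensor N (TensorProduct.assoc R N B B (u ⊗ₜ b)) = (mulRight R b).lTensor N u := by
  induction u with
  | zero => simp
  | tmul n c => simp
  | add u v hu hv => simp only [add_tmul, map_add, hu, hv]

theorem LinearMap.extendRight_tmul (f : M →ₗ[R] N ⊗[R] B) (m : M) (b : B) :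
    f.extendRight (m ⊗ₜ b) = (mulRight R b).lTensor N (f m) :=
  lTensor_mul'_assoc_tmul (f m) b

theorem LinearMap.extendRight_lTensor_mulRight (f : M →ₗ[R] N ⊗[R] B) (b : B) (t : M ⊗[R] B) :
    f.extendRight ((mulRight R b).lTensor M t) = (mulRight R b).lTensor N (f.extendRight t) := by
  induction t with
  | zero => simp
  | tmul m c => simp only [lTensor_tmul, mulRight_apply, extendRight_tmul, mulRight_mul,
      lTensor_comp_apply]
  | add u v hu hv => simp only [map_add, hu, hv]

theorem LinearMap.extendRight_comp_extendRight (f : M →ₗ[R] N ⊗[R] B) (g : N →ₗ[R] P ⊗[R] B) :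
    g.extendRight ∘ₗ f.extendRight = (g.extendRight ∘ₗ f).extendRight :=
  ext' fun m b => by
    simp only [comp_apply, extendRight_tmul, extendRight_lTensor_mulRight]

theorem LinearMap.extendRight_eq_id {f : M →ₗ[R] M ⊗[R] B} (hf : ∀ m, f m = m ⊗ₜ 1) :
    f.extendRight = LinearMap.id :=
  ext' fun m b => by simp [extendRight_tmul, hf]

theorem LinearMap.rTensor_lTensor_assoc_symm {Q : Type*} [AddCommMonoid Q] [Module R Q]
    (f : N →ₗ[R] P) (x : M ⊗[R] (N ⊗[R] Q)) :
    (f.lTensor M).rTensor Q ((TensorProduct.assoc R M N Q).symm x)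
      = (TensorProduct.assoc R M P Q).symm ((f.rTensor Q).lTensor M x) :=
  map_map_assoc_symm _ _ _ x

end ExtendRight

theorem Algebra.TensorProduct.mul_one_tmul_eq_lTensor_mulRight {R A B : Type*} [CommSemiring R]
    [Semiring A] [Algebra R A] [Semiring B] [Algebra R B] (t : A ⊗[R] B) (b : B) :
    t * (1 ⊗ₜ b) = (mulRight R b).lTensor A t := by
  induction t with
  | zero => simp
  | tmul a c => simp
  | add u v hu hv => simp only [add_mul, map_add, hu, hv]

section CastAlg

variable {k G : Type} [CommSemiring k] {H : G → Type} [∀ γ : G, Ring (H γ)]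
  [∀ γ : G, Algebra k (H γ)]

theorem castAlg_castAlg {γ γ' γ'' : G} (e : γ = γ') (e' : γ' = γ'') (x : H γ) :
    castAlg k e' (castAlg k e x) = castAlg k (e.trans e') x := by
  subst e' e; rfl

theorem castAlg_toLinearMap_rfl {γ : G} (e : γ = γ) :
    (castAlg (H := H) k e).toLinearMap = LinearMap.id :=
  rfl

end CastAlg

namespace HopfGCoalgebra

variable {k G : Type} [Field k] [Group G] {H : G → Type}
  [∀ γ : G, Ring (H γ)] [∀ γ : G, Algebra k (H γ)] (D : HopfGCoalgebra k G H)

/-- `S_{β⁻¹}`, with its target `H_{β⁻¹⁻¹}` identified with `H_β`. -/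
def antipodeTo (β : G) : H β⁻¹ →ₗ[k] H β :=
  (castAlg k (inv_inv β)).toLinearMap ∘ₗ D.S β⁻¹

/-- `φ_{α,β} : h ⊗ m ↦ h₍₁₎ ⊗ h₍₂₎m`. -/
def phi (α β : G) : H (α * β) ⊗[k] H β →ₗ[k] H α ⊗[k] H β :=
  (D.Δ α β).toLinearMap.extendRight

/-- `ψ_{α,β} : x ⊗ y ↦ x₍₁₎ ⊗ S_{β⁻¹}(x₍₂₎)y`. -/
def psi (α β : G) : H α ⊗[k] H β →ₗ[k] H (α * β) ⊗[k] H β :=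
  ((D.antipodeTo β).lTensor (H (α * β)) ∘ₗ (D.Δ (α * β) β⁻¹).toLinearMap ∘ₗ
    (castAlg k (mul_inv_cancel_right α β).symm).toLinearMap).extendRight

theorem phi_tmul (α β : G) (h : H (α * β)) (m : H β) :
    D.phi α β (h ⊗ₜ m) = D.Δ α β h * (1 ⊗ₜ m) := by
  rw [phi, extendRight_tmul, Algebra.TensorProduct.mul_one_tmul_eq_lTensor_mulRight,
    AlgHom.toLinearMap_apply]

theorem psi_tmul (α β : G) (x : H α) (y : H β) :
    D.psi α β (x ⊗ₜ y) = (mulRight k y ∘ₗ D.antipodeTo β).lTensor (H (α * β))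
      (D.Δ (α * β) β⁻¹ (castAlg k (mul_inv_cancel_right α β).symm x)) := by
  rw [psi, extendRight_tmul, lTensor_comp_apply, comp_apply, comp_apply,
    AlgHom.toLinearMap_apply, AlgEquiv.toLinearMap_apply]

theorem comul_castAlg_left {γ γ' : G} (δ : G) (e : γ = γ') (h : γ * δ = γ' * δ)
    (x : H (γ * δ)) :
    D.Δ γ' δ (castAlg k h x) = (castAlg k e).toLinearMap.rTensor (H δ) (D.Δ γ δ x) := by
  subst e
  rw [castAlg_toLinearMap_rfl, rTensor_id, id_apply]
  rfl

theorem rTensor_comul_comul (α β γ : G) (x : H (α * β * γ)) :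
    (D.Δ α β).toLinearMap.rTensor (H γ) (D.Δ (α * β) γ x)
      = (TensorProduct.assoc k (H α) (H β) (H γ)).symm
          ((D.Δ β γ).toLinearMap.lTensor (H α) (D.Δ α (β * γ) (castAlg k (mul_assoc α β γ) x))) :=
  D.coassoc α β γ x

theorem mul'_comp_lTensor_antipodeTo_comp_comul (β : G) :
    mul' k (H β) ∘ₗ (D.antipodeTo β).lTensor (H β) ∘ₗ (D.Δ β β⁻¹).toLinearMap
      = Algebra.linearMap k (H β) ∘ₗ D.ε.toLinearMap ∘ₗ
          (castAlg k (mul_inv_cancel β)).toLinearMap :=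
  LinearMap.ext fun x => (D.antipode_right β x).trans (Algebra.algebraMap_eq_smul_one _).symm

theorem mul'_comp_rTensor_antipodeTo_comp_comul (β : G) :
    mul' k (H β) ∘ₗ (D.antipodeTo β).rTensor (H β) ∘ₗ (D.Δ β⁻¹ β).toLinearMap
      = Algebra.linearMap k (H β) ∘ₗ D.ε.toLinearMap ∘ₗ
          (castAlg k (inv_mul_cancel β)).toLinearMap :=
  LinearMap.ext fun x => (D.antipode_left β x).trans (Algebra.algebraMap_eq_smul_one _).symm

theorem lTensor_unit_counit_comul {A : Type*} [Semiring A] [Algebra k A] (α : G) {γ : G}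
    (e : γ = 1) (x : H (α * γ)) :
    (Algebra.linearMap k A ∘ₗ D.ε.toLinearMap ∘ₗ (castAlg k e).toLinearMap).lTensor (H α)
        (D.Δ α γ x) = castAlg k (by rw [e, mul_one]) x ⊗ₜ 1 := by
  subst e
  have hε : D.ε.toLinearMap.lTensor (H α) (D.Δ α 1 x) = castAlg k (mul_one α) x ⊗ₜ 1 :=
    (TensorProduct.rid k (H α)).eq_symm_apply.mpr (D.counit_right α x)
  rw [lTensor_comp_apply, lTensor_comp_apply, castAlg_toLinearMap_rfl, lTensor_id, id_apply, hε,
    lTensor_tmul, Algebra.linearMap_apply, map_one]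

theorem phi_lTensor_antipodeTo_comul (α β : G) (x : H α) :
    D.phi α β ((D.antipodeTo β).lTensor (H (α * β))
        (D.Δ (α * β) β⁻¹ (castAlg k (mul_inv_cancel_right α β).symm x))) = x ⊗ₜ 1 := by
  set y := castAlg k (mul_inv_cancel_right α β).symm x
  have hcomm : (D.Δ α β).toLinearMap.rTensor (H β) ((D.antipodeTo β).lTensor (H (α * β))
      (D.Δ (α * β) β⁻¹ y)) = (D.antipodeTo β).lTensor (H α ⊗[k] H β)
        ((D.Δ α β).toLinearMap.rTensor (H β⁻¹) (D.Δ (α * β) β⁻¹ y)) :=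
    LinearMap.congr_fun ((rTensor_comp_lTensor _ _ _).trans (lTensor_comp_rTensor _ _ _).symm) _
  rw [phi, extendRight_apply, hcomm, lTensor_tensor,
    comp_apply, comp_apply, LinearEquiv.coe_coe, LinearEquiv.apply_symm_apply,
    rTensor_comul_comul, LinearEquiv.coe_coe, LinearEquiv.apply_symm_apply,
    ← lTensor_comp_apply, ← lTensor_comp_apply, comp_assoc, mul'_comp_lTensor_antipodeTo_comp_comul,
    lTensor_unit_counit_comul, castAlg_castAlg, castAlg_castAlg]
  rfl

theorem psi_comul (α β : G) (h : H (α * β)) : D.psi α β (D.Δ α β h) = h ⊗ₜ 1 := by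
  rw [psi, extendRight_apply, rTensor_comp_apply, rTensor_comp_apply,
    ← comul_castAlg_left D β (mul_inv_cancel_right α β).symm (by rw [mul_inv_cancel_right]),
    rTensor_comul_comul, rTensor_lTensor_assoc_symm, LinearEquiv.apply_symm_apply,
    ← lTensor_comp_apply, ← lTensor_comp_apply, comp_assoc, mul'_comp_rTensor_antipodeTo_comp_comul,
    lTensor_unit_counit_comul, castAlg_castAlg, castAlg_castAlg]
  rfl

theorem phi_rTensor_mulLeft (α β : G) (h : H (α * β)) (z : H (α * β) ⊗[k] H β) :
    D.phi α β ((mulLeft k h).rTensor (H β) z) = D.Δ α β h * D.phi α β z := by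
  induction z with
  | zero => simp
  | tmul h' m => rw [rTensor_tmul, mulLeft_apply, phi_tmul, phi_tmul, map_mul, mul_assoc]
  | add z z' hz hz' => rw [map_add, map_add, hz, hz', map_add, mul_add]

theorem phi_comp_psi (α β : G) : D.phi α β ∘ₗ D.psi α β = LinearMap.id := by
  rw [phi, psi, extendRight_comp_extendRight]
  exact extendRight_eq_id (D.phi_lTensor_antipodeTo_comul α β)

theorem psi_comp_phi (α β : G) : D.psi α β ∘ₗ D.phi α β = LinearMap.id := by
  rw [phi, psi, extendRight_comp_extendRight]
  exact extendRight_eq_id (D.psi_comul α β)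

end HopfGCoalgebra

open HopfGCoalgebra in
/-- The map `φ_{α,β} : H_{αβ} ⊗ H_β → H_α ⊗ H_β, h ⊗ m ↦ h₍₁₎ ⊗ h₍₂₎m` is an isomorphism of
`H_{αβ}`-modules (where `H_{αβ}` acts on the source by left multiplication on the first factor
and on the target through `Δ_{α,β}`), with inverse `ψ_{α,β} : x ⊗ y ↦ x₍₁₎ ⊗ S_{β⁻¹}(x₍₂₎)y`. -/
theorem phi_isom_of_modules
    {k G : Type} [Field k] [Group G] {H : G → Type}
    [∀ γ : G, Ring (H γ)] [∀ γ : G, Algebra k (H γ)]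
    (D : HopfGCoalgebra k G H) (α β : G)
    (φ : (H (α * β) ⊗[k] H β) →ₗ[k] (H α ⊗[k] H β))
    (ψ : (H α ⊗[k] H β) →ₗ[k] (H (α * β) ⊗[k] H β))
    (hφ : ∀ (h : H (α * β)) (m : H β),
      φ (h ⊗ₜ[k] m) = D.Δ α β h * ((1 : H α) ⊗ₜ[k] m))
    (hψ : ∀ (x : H α) (y : H β),
      ψ (x ⊗ₜ[k] y)
        = (TensorProduct.map LinearMap.id
            (LinearMap.mulRight k y ∘ₗ (castAlg k (inv_inv β)).toLinearMap ∘ₗ D.S β⁻¹))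
          (D.Δ (α * β) β⁻¹ (castAlg k (mul_inv_cancel_right α β).symm x))) :
    (∀ (h : H (α * β)) (z : H (α * β) ⊗[k] H β),
        φ ((TensorProduct.map (LinearMap.mulLeft k h) LinearMap.id) z) = D.Δ α β h * φ z)
    ∧ φ.comp ψ = LinearMap.id ∧ ψ.comp φ = LinearMap.id := by
  obtain rfl : φ = D.phi α β := ext' fun h m => (hφ h m).trans (D.phi_tmul α β h m).symm
  obtain rfl : ψ = D.psi α β := ext' fun x y => (hψ x y).trans (D.psi_tmul α β x y).symm
  exact ⟨D.phi_rTensor_mulLeft α β, D.phi_comp_psi α β, D.psi_comp_phi α β⟩
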